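/- In the Baumslag group G = ⟨a, b, t | t⁻¹at = b, b⁻¹ab = a²⟩ viewed as an HNN extension of H = ⟨a, b | b⁻¹ab = a²⟩ with associated subgroups ⟨a⟩ and ⟨b⟩, for any n ≥ 2 and x, y ∈ H: tⁿ y t⁻ⁿ = x in G implies x = y = 1. -/

import Mathlib

/-- The single relator `b⁻¹ a b * a⁻²` of the Baumslag–Solitar group BS(1,2),
with generators `a = FreeGroup.of 0`, `b = FreeGroup.of 1`. -/
def bsRels : Set (FreeGroup (Fin 2)) :=
  {(FreeGroup.of 1)⁻¹ * FreeGroup.of 0 * FreeGroup.of 1 * (FreeGroup.of 0 ^ 2)⁻¹}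

/-- The Baumslag–Solitar group `H = ⟨a, b ∣ b⁻¹ a b = a²⟩`. -/
abbrev BS12 : Type := PresentedGroup bsRels

noncomputable def bsA : BS12 := PresentedGroup.of 0
noncomputable def bsB : BS12 := PresentedGroup.of 1

/-!
By Britton's lemma, `tⁿ y t⁻ⁿ ∈ H` with `n ≥ 1` forces `y` into the associated subgroup `⟨b⟩`,
and then `tⁿ y t⁻ⁿ = tⁿ⁻¹ φ(y) t⁻⁽ⁿ⁻¹⁾` with `φ(y) ∈ ⟨a⟩`. For `n ≥ 2` Britton's lemma applies
once more and puts `φ(y)` in `⟨b⟩` as well. The exponent sum of `b` is a homomorphism `H → ℤ`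
killing `a` and sending `b` to `1`, so `⟨a⟩ ∩ ⟨b⟩ = 1`; hence `φ(y) = 1`, `y = 1` and `x = 1`.
-/

namespace HNNExtension

variable {G : Type*} [Group G] {A B : Subgroup G} {φ : A ≃* B}

theorem mem_of_t_pow_conj_mem_range {n : ℕ} (hn : n ≠ 0) {g : G}
    (h : (t ^ n * of g * (t ^ n)⁻¹ : HNNExtension G A B φ) ∈ of.range) : g ∈ A := by
  obtain ⟨k, rfl⟩ := Nat.exists_eq_succ_of_ne_zero hn
  by_contra hg
  -- the word `t^k (t g) (t⁻¹)^(k+1)` is reduced: its only pinch `t g t⁻¹` has `g ∉ A`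
  let w : NormalWord.ReducedWord G A B :=
    { head := 1
      toList := List.replicate k (1, 1) ++ (1, g) :: List.replicate (k + 1) (-1, 1)
      chain := by
        refine List.isChain_append.2 ⟨List.isChain_replicate_of_rel _ fun _ => rfl,
          List.isChain_cons.2 ⟨fun _ _ hg' => absurd hg' hg,
            List.isChain_replicate_of_rel _ fun _ => rfl⟩, ?_⟩
        intro p hp q hq _
        rw [(List.mem_replicate.1 (List.mem_of_mem_getLast? hp)).2]
        obtain rfl : (1, g) = q := by simpa using hq
        rfl }
  have hw : w.prod φ = t ^ (k + 1) * of g * (t ^ (k + 1))⁻¹ := by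
    simp [w, NormalWord.ReducedWord.prod, List.prod_replicate, pow_succ, mul_assoc, ← inv_pow,
      (Commute.self_pow t⁻¹ _).eq]
  simpa [w] using ReducedWord.toList_eq_nil_of_mem_of_range φ w (hw ▸ h)

theorem t_pow_succ_conj_of (a : A) (n : ℕ) :
    (t ^ (n + 1) * of (a : G) * (t ^ (n + 1))⁻¹ : HNNExtension G A B φ) =
      t ^ n * of (φ a : G) * (t ^ n)⁻¹ := by
  rw [equiv_eq_conj]
  group

end HNNExtension

theorem Subgroup.disjoint_zpowers_of_map_eq_one {G M : Type*} [Group G] [Group M]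
    (f : G →* M) {a b : G} (ha : f a = 1) (hb : ¬IsOfFinOrder (f b)) :
    Disjoint (zpowers a) (zpowers b) := by
  rw [Subgroup.disjoint_def]
  rintro _ ⟨i, rfl⟩ ⟨j, hj⟩
  have hj0 : j = 0 := injective_zpow_iff_not_isOfFinOrder.2 hb <| by
    simpa [map_zpow, ha] using congrArg f hj
  simp [← hj, hj0]

noncomputable def bsExpSumB : BS12 →* Multiplicative ℤ :=
  PresentedGroup.toGroup (f := fun i => if i = 0 then 1 else Multiplicative.ofAdd 1) <| by
    rintro _ rfl
    simp

theorem disjoint_zpowers_bsA_bsB : Disjoint (Subgroup.zpowers bsA) (Subgroup.zpowers bsB) :=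
  Subgroup.disjoint_zpowers_of_map_eq_one bsExpSumB
    (by simp [bsExpSumB, bsA, PresentedGroup.toGroup.of])
    (by simp [bsExpSumB, bsB, PresentedGroup.toGroup.of, isOfFinOrder_iff_zpow_eq_one])

theorem stmt_10_general (φ : Subgroup.zpowers bsA ≃* Subgroup.zpowers bsB)
    (n : ℕ) (hn : 2 ≤ n) (x y : BS12)
    (h : HNNExtension.t ^ (n : ℤ) *
        (HNNExtension.of y :
          HNNExtension BS12 (Subgroup.zpowers bsB) (Subgroup.zpowers bsA) φ.symm) *
        HNNExtension.t ^ (-(n : ℤ)) = HNNExtension.of x) :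
    x = 1 ∧ y = 1 := by
  obtain ⟨k, rfl⟩ := Nat.exists_eq_add_of_le' hn
  rw [zpow_neg, zpow_natCast] at h
  have hconj : _ ∈ HNNExtension.of.range := ⟨x, h.symm⟩
  have hyB : y ∈ Subgroup.zpowers bsB := HNNExtension.mem_of_t_pow_conj_mem_range (by omega) hconj
  rw [HNNExtension.t_pow_succ_conj_of ⟨y, hyB⟩] at hconj
  have hφyB := HNNExtension.mem_of_t_pow_conj_mem_range (by omega) hconj
  have hφy : φ.symm ⟨y, hyB⟩ = 1 :=
    Subtype.ext (Subgroup.disjoint_def.1 disjoint_zpowers_bsA_bsB (SetLike.coe_mem _) hφyB)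
  obtain rfl : y = 1 := congrArg Subtype.val (φ.symm.map_eq_one_iff.1 hφy)
  exact ⟨HNNExtension.of_injective φ.symm (by simpa using h.symm), rfl⟩

/-- The Baumslag group as the HNN extension of `H = BS(1,2)` with stable letter `t`
satisfying `t⁻¹⟨a⟩t = ⟨b⟩` via `a ↦ b` (in Mathlib's convention,
`HNNExtension H B A ψ` where `ψ = φ.symm : ⟨b⟩ ≃* ⟨a⟩`):
for `n ≥ 2` and `x, y ∈ H`, `tⁿ y t⁻ⁿ = x` implies `x = y = 1`. -/
theorem stmt_10 (φ : Subgroup.zpowers bsA ≃* Subgroup.zpowers bsB)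
    (hφ : (φ ⟨bsA, Subgroup.mem_zpowers bsA⟩ : BS12) = bsB)
    (n : ℕ) (hn : 2 ≤ n) (x y : BS12)
    (h : HNNExtension.t ^ (n : ℤ) *
        (HNNExtension.of y :
          HNNExtension BS12 (Subgroup.zpowers bsB) (Subgroup.zpowers bsA) φ.symm) *
        HNNExtension.t ^ (-(n : ℤ)) = HNNExtension.of x) :
    x = 1 ∧ y = 1 :=
  stmt_10_general φ n hn x y h
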